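/- arXiv:1504.02052 — 2 statements merged into one kernel-verified Lean document; each statement's English description precedes it below -/
import Mathlib

section
/- Under a lex-optimal allocation with at least two distinct exchange ratio levels, the set of neighbors of the minimum-ratio nodes outside that set equals exactly the set of maximum-ratio nodes: N(L_1) = L_K. -/
open Finset

noncomputable section

variable {V : Type*}

/-- An allocation: nonnegative, supported on edges, each node distributes its full endowment. -/
def IsAlloc [Fintype V] [DecidableEq V] (G : SimpleGraph V) [DecidableRel G.Adj]
    (D : V → ℝ) (d : V → V → ℝ) : Prop :=
  (∀ i j, 0 ≤ d i j) ∧ (∀ i j, ¬ G.Adj i j → d i j = 0) ∧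
  (∀ i, ∑ j ∈ G.neighborFinset i, d i j = D i)

/-- Received resource of node `i`. -/
def recv [Fintype V] [DecidableEq V] (G : SimpleGraph V) [DecidableRel G.Adj]
    (d : V → V → ℝ) (i : V) : ℝ := ∑ j ∈ G.neighborFinset i, d j i

/-- Exchange ratio of node `i`. -/
def ratio [Fintype V] [DecidableEq V] (G : SimpleGraph V) [DecidableRel G.Adj]
    (D : V → ℝ) (d : V → V → ℝ) (i : V) : ℝ := recv G d i / D i

/-- Total resource flowing into `S` from outside. -/
def inFlow [Fintype V] [DecidableEq V] (G : SimpleGraph V) [DecidableRel G.Adj]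
    (d : V → V → ℝ) (S : Finset V) : ℝ :=
  ∑ i ∈ S, ∑ j ∈ G.neighborFinset i \ S, d j i

/-- Total resource flowing out of `S`. -/
def outFlow [Fintype V] [DecidableEq V] (G : SimpleGraph V) [DecidableRel G.Adj]
    (d : V → V → ℝ) (S : Finset V) : ℝ :=
  ∑ i ∈ S, ∑ j ∈ G.neighborFinset i \ S, d i j

/-- Sorted (non-decreasing) list of exchange ratios. -/
def sortedRatios [Fintype V] [DecidableEq V] (G : SimpleGraph V) [DecidableRel G.Adj]
    (D : V → ℝ) (d : V → V → ℝ) : List ℝ :=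
  (Finset.univ.val.map (ratio G D d)).sort (· ≤ ·)

/-- Lexicographic optimality: no allocation gives a lexicographically larger sorted ratio vector. -/
def LexOpt [Fintype V] [DecidableEq V] (G : SimpleGraph V) [DecidableRel G.Adj]
    (D : V → ℝ) (d : V → V → ℝ) : Prop :=
  IsAlloc G D d ∧ ∀ d', IsAlloc G D d' →
    ¬ List.Lex (· < ·) (sortedRatios G D d) (sortedRatios G D d')

/-- Minimum exchange ratio. -/
def minRatio [Fintype V] [Nonempty V] [DecidableEq V] (G : SimpleGraph V) [DecidableRel G.Adj]
    (D : V → ℝ) (d : V → V → ℝ) : ℝ := Finset.univ.inf' Finset.univ_nonempty (ratio G D d)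

/-- Maximum exchange ratio. -/
def maxRatio [Fintype V] [Nonempty V] [DecidableEq V] (G : SimpleGraph V) [DecidableRel G.Adj]
    (D : V → ℝ) (d : V → V → ℝ) : ℝ := Finset.univ.sup' Finset.univ_nonempty (ratio G D d)

/-- The set `L₁` of nodes attaining the minimum exchange ratio. -/
def minSet [Fintype V] [Nonempty V] [DecidableEq V] (G : SimpleGraph V) [DecidableRel G.Adj]
    (D : V → ℝ) (d : V → V → ℝ) : Finset V :=
  Finset.univ.filter (fun i => ratio G D d i = minRatio G D d)

/-- The set `L_K` of nodes attaining the maximum exchange ratio. -/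
def maxSet [Fintype V] [Nonempty V] [DecidableEq V] (G : SimpleGraph V) [DecidableRel G.Adj]
    (D : V → ℝ) (d : V → V → ℝ) : Finset V :=
  Finset.univ.filter (fun i => ratio G D d i = maxRatio G D d)

/-- External neighborhood of a set of nodes. -/
def extNbhd [Fintype V] [DecidableEq V] (G : SimpleGraph V) [DecidableRel G.Adj]
    (S : Finset V) : Finset V := (S.biUnion fun i => G.neighborFinset i) \ S

/-!
In a lex-optimal allocation a node sends only to those of its neighbours whose ratio is smallest:
otherwise moving a little of its gift from one neighbour to another of smaller ratio would raise
the sorted ratio vector. Hence the nodes sending into `L₁` are exactly its neighbours `N`, and they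
send nowhere else; dually, the nodes sending into `L_K` are exactly the nodes `Z` all of whose
neighbours lie in `L_K`. Comparing endowments and receipts,
`D(L₁) ≤ recv(N) ≤ l_K D(N) = l_K l₁ D(L₁)` and `l₁ l_K D(L_K) = l₁ D(Z) ≤ recv(Z) ≤ D(L_K)`,
so `l₁ l_K = 1` and both chains are tight: `N ⊆ L_K` and `Z ⊆ L₁`. Finally every node of `L_K`
receives something, necessarily from `Z ⊆ L₁`, so `L_K ⊆ N`.
-/

theorem List.lex_lt_of_count_lt {α : Type*} [LinearOrder α] {x : α} :
    ∀ {l₁ l₂ : List α}, l₁.Pairwise (· ≤ ·) → l₂.Pairwise (· ≤ ·) → l₁.length = l₂.length →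
      (∀ y < x, l₁.count y = l₂.count y) → l₂.count x < l₁.count x → List.Lex (· < ·) l₁ l₂
  | [], _, _, _, _, _, hx => by simp at hx
  | _ :: _, [], _, _, hlen, _, _ => by simp at hlen
  | a :: t₁, b :: t₂, h₁, h₂, hlen, hlow, hx => by
    obtain rfl | hab := eq_or_ne a b
    · refine .cons (lex_lt_of_count_lt (x := x) h₁.of_cons h₂.of_cons (by simpa using hlen)
        (fun y hy => ?_) ?_)
      · simpa [List.count_cons] using hlow y hy
      · simpa [List.count_cons] using hx
    · refine .rel (lt_of_le_of_ne ?_ hab)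
      rcases lt_or_ge b x with hbx | hxb
      · have hb : b ∈ a :: t₁ := by
          rw [← List.count_pos_iff, hlow b hbx]; simp
        exact (List.mem_cons.1 hb).elim (fun h => h.symm.le) (List.rel_of_pairwise_cons h₁)
      · have hx : x ∈ a :: t₁ := List.count_pos_iff.1 (by omega)
        exact ((List.mem_cons.1 hx).elim (fun h => h.symm.le)
          (List.rel_of_pairwise_cons h₁)).trans hxb

theorem lex_sort_map_of_raise {ι α : Type*} [Fintype ι] [LinearOrder α] {f f' : ι → α} {x : α}
    (hlt : ∀ a, f a < x → f' a = f a) (hle : ∀ a, f' a ≤ x → f a = f' a) {k : ι}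
    (hk : f k = x) (hk' : x < f' k) :
    List.Lex (· < ·) ((univ.val.map f).sort (· ≤ ·)) ((univ.val.map f').sort (· ≤ ·)) := by
  have hcount : ∀ (g : ι → α) y, ((univ.val.map g).sort (· ≤ ·)).count y = #{a | y = g a} := by
    intro g y
    rw [← Multiset.coe_count, Multiset.sort_eq, Multiset.count_map, ← filter_val, card_val]
  refine List.lex_lt_of_count_lt (x := x) (Multiset.pairwise_sort _ _) (Multiset.pairwise_sort _ _)
    (by simp) (fun y hy => ?_) ?_ <;> rw [hcount, hcount]
  · congr 1
    ext a
    simp only [mem_filter, mem_univ, true_and]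
    exact ⟨fun h => (hlt a (h ▸ hy)).trans h.symm |>.symm,
      fun h => (hle a (h ▸ hy.le)).trans h.symm |>.symm⟩
  · refine card_lt_card ⟨fun a ha => ?_, fun h => ?_⟩
    · simp only [mem_filter, mem_univ, true_and] at ha ⊢
      exact ha.trans (hle a ha.symm.le).symm
    · have := h (mem_filter.2 ⟨mem_univ k, hk.symm⟩)
      exact hk'.ne (mem_filter.1 this).2

section Allocation

variable [Fintype V] [DecidableEq V] {G : SimpleGraph V} [DecidableRel G.Adj]
  {D : V → ℝ} {d : V → V → ℝ}

theorem IsAlloc.nonneg (h : IsAlloc G D d) (i j : V) : 0 ≤ d i j := h.1 i j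

theorem IsAlloc.adj_of_ne_zero (h : IsAlloc G D d) {i j : V} (hij : d i j ≠ 0) : G.Adj i j :=
  not_not.1 fun hn => hij (h.2.1 i j hn)

theorem IsAlloc.sum_univ (h : IsAlloc G D d) (i : V) : ∑ j, d i j = D i := by
  rw [← h.2.2 i]
  exact (sum_subset (subset_univ _) fun j _ hj => h.2.1 i j (by simpa using hj)).symm

theorem IsAlloc.recv_eq_sum_univ (h : IsAlloc G D d) (i : V) : recv G d i = ∑ j, d j i :=
  sum_subset (subset_univ _) fun j _ hj => h.2.1 j i fun hadj => hj (by simpa using hadj.symm)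

theorem IsAlloc.sum_recv_le (h : IsAlloc G D d) {S T : Finset V}
    (hin : ∀ j ∉ T, ∀ x ∈ S, d j x = 0) : ∑ x ∈ S, recv G d x ≤ ∑ j ∈ T, D j :=
  calc ∑ x ∈ S, recv G d x = ∑ j, ∑ x ∈ S, d j x := by
        simp_rw [h.recv_eq_sum_univ]; exact sum_comm
    _ = ∑ j ∈ T, ∑ x ∈ S, d j x :=
        (sum_subset (subset_univ T) fun j _ hj => sum_eq_zero (hin j hj)).symm
    _ ≤ ∑ j ∈ T, ∑ x, d j x := sum_le_sum fun j _ =>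
        sum_le_sum_of_subset_of_nonneg (subset_univ S) fun x _ _ => h.nonneg j x
    _ = ∑ j ∈ T, D j := sum_congr rfl fun j _ => h.sum_univ j

theorem IsAlloc.sum_le_sum_recv (h : IsAlloc G D d) {S T : Finset V}
    (hout : ∀ j ∈ T, ∀ x ∉ S, d j x = 0) : ∑ j ∈ T, D j ≤ ∑ x ∈ S, recv G d x :=
  calc ∑ j ∈ T, D j = ∑ j ∈ T, ∑ x ∈ S, d j x := sum_congr rfl fun j hj => by
        rw [← h.sum_univ j]
        exact (sum_subset (subset_univ S) fun x _ hx => hout j hj x hx).symm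
    _ ≤ ∑ j, ∑ x ∈ S, d j x := sum_le_sum_of_subset_of_nonneg (subset_univ T)
        fun j _ _ => sum_nonneg fun x _ => h.nonneg j x
    _ = ∑ x ∈ S, recv G d x := by simp_rw [h.recv_eq_sum_univ]; exact sum_comm

theorem IsAlloc.ratio_nonneg (h : IsAlloc G D d) (hD : ∀ i, 0 < D i) (i : V) :
    0 ≤ ratio G D d i :=
  div_nonneg (sum_nonneg fun j _ => h.nonneg j i) (hD i).le

theorem recv_eq_ratio_mul (hD : ∀ i, 0 < D i) (i : V) : recv G d i = ratio G D d i * D i :=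
  (div_mul_cancel₀ _ (hD i).ne').symm

theorem sum_recv_le_mul (hD : ∀ i, 0 < D i) {S : Finset V} {c : ℝ}
    (h : ∀ x ∈ S, ratio G D d x ≤ c) : ∑ x ∈ S, recv G d x ≤ c * ∑ x ∈ S, D x := by
  rw [mul_sum]
  refine sum_le_sum fun x hx => ?_
  rw [recv_eq_ratio_mul hD]
  gcongr
  exacts [(hD x).le, h x hx]

theorem mul_le_sum_recv (hD : ∀ i, 0 < D i) {S : Finset V} {c : ℝ}
    (h : ∀ x ∈ S, c ≤ ratio G D d x) : c * ∑ x ∈ S, D x ≤ ∑ x ∈ S, recv G d x := by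
  rw [mul_sum]
  refine sum_le_sum fun x hx => ?_
  rw [recv_eq_ratio_mul hD]
  gcongr
  exacts [(hD x).le, h x hx]

theorem sum_recv_eq_mul (hD : ∀ i, 0 < D i) {S : Finset V} {c : ℝ}
    (h : ∀ x ∈ S, ratio G D d x = c) : ∑ x ∈ S, recv G d x = c * ∑ x ∈ S, D x :=
  (sum_recv_le_mul hD fun x hx => (h x hx).le).antisymm
    (mul_le_sum_recv hD fun x hx => (h x hx).ge)

theorem ratio_eq_of_mul_le_sum_recv (hD : ∀ i, 0 < D i) {S : Finset V} {c : ℝ}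
    (h : ∀ x ∈ S, ratio G D d x ≤ c) (hsum : c * ∑ x ∈ S, D x ≤ ∑ x ∈ S, recv G d x) :
    ∀ x ∈ S, ratio G D d x = c := by
  have hle : ∀ x ∈ S, recv G d x ≤ c * D x := fun x hx => by
    rw [recv_eq_ratio_mul hD]; gcongr; exacts [(hD x).le, h x hx]
  have heq := (sum_eq_sum_iff_of_le hle).1 <| (sum_le_sum hle).antisymm (by rwa [← mul_sum])
  intro x hx
  rw [ratio, heq x hx, mul_div_cancel_right₀ _ (hD x).ne']

theorem ratio_eq_of_sum_recv_le_mul (hD : ∀ i, 0 < D i) {S : Finset V} {c : ℝ}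
    (h : ∀ x ∈ S, c ≤ ratio G D d x) (hsum : ∑ x ∈ S, recv G d x ≤ c * ∑ x ∈ S, D x) :
    ∀ x ∈ S, ratio G D d x = c := by
  have hle : ∀ x ∈ S, c * D x ≤ recv G d x := fun x hx => by
    rw [recv_eq_ratio_mul hD]; gcongr; exacts [(hD x).le, h x hx]
  have heq := (sum_eq_sum_iff_of_le hle).1 <| (sum_le_sum hle).antisymm (by rwa [← mul_sum])
  intro x hx
  rw [ratio, ← heq x hx, mul_div_cancel_right₀ _ (hD x).ne']

theorem recv_update_add {i : V} {g : V → ℝ} (hg : ∀ b, ¬G.Adj i b → g b = 0) (x : V) :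
    recv G (Function.update d i (d i + g)) x = recv G d x + g x := by
  have hterm : ∀ j, Function.update d i (d i + g) j x = d j x + if j = i then g x else 0 := by
    intro j
    rcases eq_or_ne j i with rfl | hj <;> simp [*]
  rw [recv, sum_congr rfl fun j _ => hterm j, sum_add_distrib, sum_ite_eq', recv]
  split_ifs with hi
  · rfl
  · rw [hg x fun hadj => hi (by simpa using hadj.symm)]

theorem IsAlloc.update_add (h : IsAlloc G D d) {i : V} {g : V → ℝ} (hnn : 0 ≤ d i + g)
    (hg : ∀ b, ¬G.Adj i b → g b = 0) (hsum : ∑ b ∈ G.neighborFinset i, g b = 0) :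
    IsAlloc G D (Function.update d i (d i + g)) := by
  refine ⟨fun a b => ?_, fun a b hab => ?_, fun a => ?_⟩ <;> rcases eq_or_ne a i with rfl | ha
  · simpa using hnn b
  · simpa [ha] using h.nonneg a b
  · simp [h.2.1 a b hab, hg b hab]
  · simpa [ha] using h.2.1 a b hab
  · simp [sum_add_distrib, h.2.2 a, hsum]
  · simpa [ha] using h.2.2 a

end Allocation

section LexOpt

variable [Fintype V] [DecidableEq V] {G : SimpleGraph V} [DecidableRel G.Adj]
  {D : V → ℝ} {d : V → V → ℝ}

theorem LexOpt.ratio_le_of_pos (hopt : LexOpt G D d) (hD : ∀ i, 0 < D i) {i k k' : V}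
    (hk : G.Adj i k) (hk' : G.Adj i k') (hpos : 0 < d i k) : ratio G D d k ≤ ratio G D d k' := by
  by_contra! hlt
  have hkk' : k ≠ k' := by rintro rfl; exact lt_irrefl _ hlt
  -- `ε` is small enough that after the move `k` still lies above the old ratio of `k'`.
  obtain ⟨ε, hε, hεmin⟩ := exists_between (lt_min hpos (mul_pos (sub_pos.2 hlt) (hD k)))
  have hεd : ε ≤ d i k := (hεmin.trans_le (min_le_left _ _)).le
  have hεk : ε / D k < ratio G D d k - ratio G D d k' :=
    (div_lt_iff₀ (hD k)).2 (hεmin.trans_le (min_le_right _ _))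
  set g : V → ℝ := Pi.single k' ε - Pi.single k ε
  have hg_of_ne : ∀ a, a ≠ k → a ≠ k' → g a = 0 := fun a hak hak' => by simp [g, hak, hak']
  have hg : ∀ b, ¬G.Adj i b → g b = 0 := fun b hb =>
    hg_of_ne b (by rintro rfl; exact hb hk) (by rintro rfl; exact hb hk')
  have hnn : 0 ≤ d i + g := fun b => by
    rcases eq_or_ne b k with rfl | hbk
    · simpa [g, hkk'] using hεd
    · refine add_nonneg (hopt.1.nonneg i b) ?_
      rcases eq_or_ne b k' with rfl | hbk' <;> simp [g, *, hε.le]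
  have hsum : ∑ b ∈ G.neighborFinset i, g b = 0 := by
    simp [g, sum_sub_distrib, sum_pi_single', hk, hk']
  have hratio : ∀ x, ratio G D (Function.update d i (d i + g)) x = ratio G D d x + g x / D x :=
    fun x => by rw [ratio, recv_update_add hg, add_div, ratio]
  have hk'_up : ratio G D d k' < ratio G D (Function.update d i (d i + g)) k' := by
    rw [hratio]; simpa [g, hkk'.symm] using div_pos hε (hD k')
  refine hopt.2 _ (hopt.1.update_add hnn hg hsum)
    (lex_sort_map_of_raise (x := ratio G D d k') (fun a ha => ?_) (fun a ha => ?_) rfl hk'_up)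
  · rw [hratio, hg_of_ne a (by rintro rfl; linarith) (by rintro rfl; exact lt_irrefl _ ha)]
    simp
  · have hak : a ≠ k := by
      rintro rfl
      rw [hratio] at ha
      simp [g, hkk'] at ha
      linarith [neg_div (D a) ε]
    have hak' : a ≠ k' := by rintro rfl; exact ha.not_gt hk'_up
    rw [hratio, hg_of_ne a hak hak']
    simp

theorem LexOpt.eq_zero_of_adj_of_ratio_lt (hopt : LexOpt G D d) (hD : ∀ i, 0 < D i)
    {j k x : V} (hk : G.Adj j k) (hlt : ratio G D d k < ratio G D d x) : d j x = 0 := by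
  by_contra hne
  exact (hopt.ratio_le_of_pos hD (hopt.1.adj_of_ne_zero hne) hk
    ((hopt.1.nonneg j x).lt_of_ne' hne)).not_gt hlt

end LexOpt

def nbhd [Fintype V] [DecidableEq V] (G : SimpleGraph V) [DecidableRel G.Adj]
    (S : Finset V) : Finset V := S.biUnion fun i => G.neighborFinset i

def nbhdInterior [Fintype V] [DecidableEq V] (G : SimpleGraph V) [DecidableRel G.Adj]
    (T : Finset V) : Finset V := univ.filter fun a => G.neighborFinset a ⊆ T

section Levels

variable [Fintype V] [DecidableEq V] {G : SimpleGraph V} [DecidableRel G.Adj]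
  {D : V → ℝ} {d : V → V → ℝ}

theorem mem_nbhd {S : Finset V} {a : V} : a ∈ nbhd G S ↔ ∃ x ∈ S, G.Adj x a := by
  simp [nbhd]

theorem mem_nbhdInterior {T : Finset V} {a : V} :
    a ∈ nbhdInterior G T ↔ ∀ x, G.Adj a x → x ∈ T := by
  simp [nbhdInterior, subset_iff]

theorem IsAlloc.sum_le_sum_recv_nbhd (h : IsAlloc G D d) (S : Finset V) :
    ∑ j ∈ S, D j ≤ ∑ x ∈ nbhd G S, recv G d x :=
  h.sum_le_sum_recv fun j hj x hx => by
    by_contra hne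
    exact hx (mem_nbhd.2 ⟨j, hj, h.adj_of_ne_zero hne⟩)

theorem IsAlloc.sum_recv_nbhdInterior_le (h : IsAlloc G D d) (T : Finset V) :
    ∑ x ∈ nbhdInterior G T, recv G d x ≤ ∑ j ∈ T, D j :=
  h.sum_recv_le fun j hj x hx => by
    by_contra hne
    exact hj (mem_nbhdInterior.1 hx j (h.adj_of_ne_zero hne).symm)

variable [Nonempty V]

theorem minRatio_le (i : V) : minRatio G D d ≤ ratio G D d i := inf'_le _ (mem_univ i)

theorem le_maxRatio (i : V) : ratio G D d i ≤ maxRatio G D d := le_sup' _ (mem_univ i)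

theorem mem_minSet {i : V} : i ∈ minSet G D d ↔ ratio G D d i = minRatio G D d := by
  simp [minSet]

theorem mem_maxSet {i : V} : i ∈ maxSet G D d ↔ ratio G D d i = maxRatio G D d := by
  simp [maxSet]

theorem minSet_nonempty : (minSet G D d).Nonempty := by
  obtain ⟨i, -, hi⟩ := exists_mem_eq_inf' univ_nonempty (ratio G D d)
  exact ⟨i, mem_minSet.2 hi.symm⟩

theorem maxSet_nonempty : (maxSet G D d).Nonempty := by
  obtain ⟨i, -, hi⟩ := exists_mem_eq_sup' univ_nonempty (ratio G D d)
  exact ⟨i, mem_maxSet.2 hi.symm⟩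

theorem disjoint_minSet_maxSet (hK : ∃ i j, ratio G D d i ≠ ratio G D d j) :
    Disjoint (minSet G D d) (maxSet G D d) := by
  refine disjoint_left.2 fun i hmin hmax => ?_
  obtain ⟨j, j', hjj'⟩ := hK
  have hflat : ∀ a, ratio G D d a = minRatio G D d := fun a =>
    (le_antisymm (mem_minSet.1 hmin ▸ mem_maxSet.1 hmax ▸ le_maxRatio a) (minRatio_le a))
  exact hjj' ((hflat j).trans (hflat j').symm)

theorem LexOpt.eq_zero_of_notMem_nbhdInterior (hopt : LexOpt G D d) (hD : ∀ i, 0 < D i)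
    {j x : V} (hj : j ∉ nbhdInterior G (maxSet G D d)) (hx : x ∈ maxSet G D d) : d j x = 0 := by
  obtain ⟨k, hk, hkmax⟩ : ∃ k, G.Adj j k ∧ k ∉ maxSet G D d := by
    simpa [mem_nbhdInterior] using hj
  refine hopt.eq_zero_of_adj_of_ratio_lt hD hk ?_
  rw [mem_maxSet.1 hx]
  exact (le_maxRatio k).lt_of_ne (mt mem_maxSet.2 hkmax)

theorem LexOpt.minRatio_mul_sum_minSet (hopt : LexOpt G D d) (hD : ∀ i, 0 < D i) :
    minRatio G D d * ∑ x ∈ minSet G D d, D x = ∑ j ∈ nbhd G (minSet G D d), D j := by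
  rw [← sum_recv_eq_mul hD fun x hx => mem_minSet.1 hx]
  refine le_antisymm (hopt.1.sum_recv_le fun j hj x hx => ?_)
    (hopt.1.sum_le_sum_recv fun j hj x hx => ?_)
  · by_contra hne
    exact hj (mem_nbhd.2 ⟨x, hx, (hopt.1.adj_of_ne_zero hne).symm⟩)
  · obtain ⟨k, hk, hkj⟩ := mem_nbhd.1 hj
    refine hopt.eq_zero_of_adj_of_ratio_lt hD hkj.symm ?_
    rw [mem_minSet.1 hk]
    exact (minRatio_le x).lt_of_ne' (mt mem_minSet.2 hx)

theorem LexOpt.maxRatio_mul_sum_maxSet (hopt : LexOpt G D d) (hD : ∀ i, 0 < D i) :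
    maxRatio G D d * ∑ x ∈ maxSet G D d, D x = ∑ j ∈ nbhdInterior G (maxSet G D d), D j := by
  rw [← sum_recv_eq_mul hD fun x hx => mem_maxSet.1 hx]
  refine le_antisymm (hopt.1.sum_recv_le fun j hj x hx =>
    hopt.eq_zero_of_notMem_nbhdInterior hD hj hx) (hopt.1.sum_le_sum_recv fun j hj x hx => ?_)
  by_contra hne
  exact hx (mem_nbhdInterior.1 hj x (hopt.1.adj_of_ne_zero hne))

theorem LexOpt.minRatio_mul_maxRatio (hopt : LexOpt G D d) (hD : ∀ i, 0 < D i) :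
    minRatio G D d * maxRatio G D d = 1 := by
  have hmax_pos : 0 < ∑ x ∈ maxSet G D d, D x := sum_pos (fun x _ => hD x) maxSet_nonempty
  have hmin_pos : 0 < ∑ x ∈ minSet G D d, D x := sum_pos (fun x _ => hD x) minSet_nonempty
  apply le_antisymm
  · refine le_of_mul_le_mul_right ?_ hmax_pos
    calc minRatio G D d * maxRatio G D d * ∑ x ∈ maxSet G D d, D x
        = minRatio G D d * ∑ j ∈ nbhdInterior G (maxSet G D d), D j := by
          rw [mul_assoc, hopt.maxRatio_mul_sum_maxSet hD]
      _ ≤ ∑ x ∈ nbhdInterior G (maxSet G D d), recv G d x :=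
          mul_le_sum_recv hD fun x _ => minRatio_le x
      _ ≤ ∑ x ∈ maxSet G D d, D x := hopt.1.sum_recv_nbhdInterior_le _
      _ = 1 * ∑ x ∈ maxSet G D d, D x := (one_mul _).symm
  · refine le_of_mul_le_mul_right ?_ hmin_pos
    calc 1 * ∑ x ∈ minSet G D d, D x = ∑ x ∈ minSet G D d, D x := one_mul _
      _ ≤ ∑ x ∈ nbhd G (minSet G D d), recv G d x := hopt.1.sum_le_sum_recv_nbhd _
      _ ≤ maxRatio G D d * ∑ j ∈ nbhd G (minSet G D d), D j :=
          sum_recv_le_mul hD fun x _ => le_maxRatio x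
      _ = minRatio G D d * maxRatio G D d * ∑ x ∈ minSet G D d, D x := by
          rw [← hopt.minRatio_mul_sum_minSet hD]; ring

theorem LexOpt.nbhd_minSet_subset_maxSet (hopt : LexOpt G D d) (hD : ∀ i, 0 < D i) :
    nbhd G (minSet G D d) ⊆ maxSet G D d := by
  refine fun x hx =>
    mem_maxSet.2 (ratio_eq_of_mul_le_sum_recv hD (fun y _ => le_maxRatio y) ?_ x hx)
  calc maxRatio G D d * ∑ j ∈ nbhd G (minSet G D d), D j
      = minRatio G D d * maxRatio G D d * ∑ x ∈ minSet G D d, D x := by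
        rw [← hopt.minRatio_mul_sum_minSet hD]; ring
    _ = ∑ x ∈ minSet G D d, D x := by rw [hopt.minRatio_mul_maxRatio hD, one_mul]
    _ ≤ ∑ x ∈ nbhd G (minSet G D d), recv G d x := hopt.1.sum_le_sum_recv_nbhd _

theorem LexOpt.nbhdInterior_maxSet_subset_minSet (hopt : LexOpt G D d) (hD : ∀ i, 0 < D i) :
    nbhdInterior G (maxSet G D d) ⊆ minSet G D d := by
  refine fun x hx =>
    mem_minSet.2 (ratio_eq_of_sum_recv_le_mul hD (fun y _ => minRatio_le y) ?_ x hx)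
  calc ∑ x ∈ nbhdInterior G (maxSet G D d), recv G d x ≤ ∑ x ∈ maxSet G D d, D x :=
        hopt.1.sum_recv_nbhdInterior_le _
    _ = minRatio G D d * maxRatio G D d * ∑ x ∈ maxSet G D d, D x := by
        rw [hopt.minRatio_mul_maxRatio hD, one_mul]
    _ = minRatio G D d * ∑ j ∈ nbhdInterior G (maxSet G D d), D j := by
        rw [mul_assoc, hopt.maxRatio_mul_sum_maxSet hD]

theorem LexOpt.maxSet_subset_nbhd_minSet (hopt : LexOpt G D d) (hD : ∀ i, 0 < D i) :
    maxSet G D d ⊆ nbhd G (minSet G D d) := by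
  intro m hm
  have hmax_pos : 0 < maxRatio G D d := by
    refine ((hopt.1.ratio_nonneg hD m).trans (le_maxRatio m)).lt_of_ne fun h => ?_
    simpa [← h] using hopt.minRatio_mul_maxRatio hD
  have hrecv : recv G d m ≠ 0 := by
    rw [recv_eq_ratio_mul hD, mem_maxSet.1 hm]
    exact (mul_pos hmax_pos (hD m)).ne'
  obtain ⟨p, -, hp⟩ := exists_ne_zero_of_sum_ne_zero hrecv
  have hp_int : p ∈ nbhdInterior G (maxSet G D d) :=
    not_not.1 fun h => hp (hopt.eq_zero_of_notMem_nbhdInterior hD h hm)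
  exact mem_nbhd.2 ⟨p, hopt.nbhdInterior_maxSet_subset_minSet hD hp_int, hopt.1.adj_of_ne_zero hp⟩

end Levels

theorem stmt10_general [Fintype V] [Nonempty V] [DecidableEq V] (G : SimpleGraph V) [DecidableRel G.Adj]
    (D : V → ℝ) (hD : ∀ i, 0 < D i) (d : V → V → ℝ)
    (hopt : LexOpt G D d) (hK : ∃ i j, ratio G D d i ≠ ratio G D d j) :
    extNbhd G (minSet G D d) = maxSet G D d :=
  Subset.antisymm (sdiff_subset.trans (hopt.nbhd_minSet_subset_maxSet hD))
    (subset_sdiff.2 ⟨hopt.maxSet_subset_nbhd_minSet hD, (disjoint_minSet_maxSet hK).symm⟩)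

theorem stmt10 [Fintype V] [Nonempty V] [DecidableEq V] (G : SimpleGraph V) [DecidableRel G.Adj]
    (hconn : G.Connected) (D : V → ℝ) (hD : ∀ i, 0 < D i) (d : V → V → ℝ)
    (hopt : LexOpt G D d) (hK : ∃ i j, ratio G D d i ≠ ratio G D d j) :
    extNbhd G (minSet G D d) = maxSet G D d :=
  stmt10_general G D hD d hopt hK
end
end

section
/- If an allocation d satisfies, for every node i: (a) d_ji = ρ_i · d_ij for all neighbors j of i (where ρ_i = r_i/D_i), and (b) every neighbor j of i with d_ij = 0 has ρ_j ≥ 1/ρ_i, then d is lexicographically optimal. -/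
open Finset

noncomputable section

variable {V : Type*}

/-!
Condition (a) forces `ρ i * ρ j = 1` along every edge that carries resource, and (b) gives
`ρ i * ρ j ≥ 1` along every edge. Hence a node adjacent to the sublevel set `P = {ρ ≤ t}` sends
all of its endowment into `P`, so no allocation `d'` can deliver more to `P` than `d` does:
`∑_{i ∈ P} D i ρ' i ≤ ∑_{i ∈ P} D i ρ i` for every `t`. Peeling off the nodes of least ratio
one at a time, these weighted sublevel inequalities rule out a lexicographic improvement.
-/

lemma Finset.sort_map_eq_cons {ι α : Type*} [DecidableEq ι] [LinearOrder α] {S : Finset ι}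
    {f : ι → α} {i : ι} (hi : i ∈ S) (hmin : ∀ j ∈ S, f i ≤ f j) :
    (S.val.map f).sort (· ≤ ·) = f i :: ((S.erase i).val.map f).sort (· ≤ ·) := by
  have hcons : S.val.map f = f i ::ₘ (S.erase i).val.map f := by
    rw [Finset.erase_val, ← Multiset.map_cons, Multiset.cons_erase hi]
  rw [hcons, Multiset.sort_cons]
  intro b hb
  obtain ⟨j, hj, rfl⟩ := Multiset.mem_map.1 hb
  exact hmin j (Finset.mem_of_mem_erase hj)

lemma List.le_of_lex_cons {α : Type*} [LinearOrder α] {a b : α} {l l' : List α}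
    (h : List.Lex (· < ·) (a :: l) (b :: l')) : a ≤ b := by
  cases h with
  | rel h => exact h.le
  | cons => exact le_rfl

theorem not_lex_sort_of_sum_sublevel_le {ι : Type*} [DecidableEq ι] (w ρ ρ' : ι → ℝ)
    (hw : ∀ i, 0 < w i) (S : Finset ι)
    (h : ∀ t, ∑ i ∈ S with ρ i ≤ t, w i * ρ' i ≤ ∑ i ∈ S with ρ i ≤ t, w i * ρ i) :
    ¬ List.Lex (· < ·) ((S.val.map ρ).sort (· ≤ ·)) ((S.val.map ρ').sort (· ≤ ·)) := by
  induction S using Finset.strongInduction with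
  | H S ih =>
  intro hlex
  rcases S.eq_empty_or_nonempty with rfl | hS
  · simp at hlex
  obtain ⟨i₀, hi₀, hmin⟩ := S.exists_min_image ρ hS
  obtain ⟨j₀, hj₀, hmin'⟩ := S.exists_min_image ρ' hS
  have hle : ρ i₀ ≤ ρ' j₀ := by
    rw [Finset.sort_map_eq_cons hi₀ hmin, Finset.sort_map_eq_cons hj₀ hmin'] at hlex
    exact List.le_of_lex_cons hlex
  have hmin₀ : ∀ j ∈ S, ρ i₀ ≤ ρ' j := fun j hj => hle.trans (hmin' j hj)
  -- On the lowest sublevel set `ρ' ≥ ρ` termwise, so the hypothesis at `t = ρ i₀` is an equality.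
  have heq : ρ' i₀ = ρ i₀ := by
    have hterm : ∀ i ∈ S.filter fun i => ρ i ≤ ρ i₀, w i * ρ i ≤ w i * ρ' i := by
      intro i hi
      obtain ⟨hiS, hi⟩ := Finset.mem_filter.1 hi
      rw [le_antisymm hi (hmin i hiS)]
      exact mul_le_mul_of_nonneg_left (hmin₀ i hiS) (hw i).le
    have hsum := (Finset.sum_eq_sum_iff_of_le hterm).1
      (le_antisymm (Finset.sum_le_sum hterm) (h (ρ i₀))) i₀ (by simp [hi₀])
    exact (mul_left_cancel₀ (hw i₀).ne' hsum).symm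
  rw [Finset.sort_map_eq_cons hi₀ hmin, Finset.sort_map_eq_cons hi₀ (heq ▸ hmin₀), heq,
    List.lex_cons_iff] at hlex
  refine ih _ (Finset.erase_ssubset hi₀) (fun t => ?_) hlex
  have ht := h t
  simp only [Finset.sum_filter] at ht ⊢
  rw [Finset.sum_erase_eq_sub hi₀, Finset.sum_erase_eq_sub hi₀, heq]
  linarith

section

variable [Fintype V] [DecidableEq V] {G : SimpleGraph V} [DecidableRel G.Adj]
  {D : V → ℝ} {d : V → V → ℝ}

lemma mul_ratio {i : V} (hD : D i ≠ 0) : D i * ratio G D d i = recv G d i :=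
  mul_div_cancel₀ _ hD

namespace IsAlloc

lemma sum_eq (hd : IsAlloc G D d) (j : V) : ∑ i, d j i = D j := by
  rw [← hd.2.2 j]
  refine (Finset.sum_subset (Finset.subset_univ _) fun i _ hi => hd.2.1 j i ?_).symm
  rwa [← SimpleGraph.mem_neighborFinset]

lemma recv_eq (hd : IsAlloc G D d) (i : V) : recv G d i = ∑ j, d j i :=
  Finset.sum_subset (Finset.subset_univ _) fun j _ hj =>
    hd.2.1 j i fun h => hj ((G.mem_neighborFinset i j).2 h.symm)

lemma sum_le (hd : IsAlloc G D d) (j : V) (P : Finset V) : ∑ i ∈ P, d j i ≤ D j :=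
  hd.sum_eq j ▸ Finset.sum_le_sum_of_subset_of_nonneg (Finset.subset_univ P)
    fun i _ _ => hd.1 j i

lemma sum_eq_of_support_subset (hd : IsAlloc G D d) {j : V} {P : Finset V}
    (hP : ∀ i, 0 < d j i → i ∈ P) : ∑ i ∈ P, d j i = D j :=
  hd.sum_eq j ▸ Finset.sum_subset (Finset.subset_univ P)
    fun i _ hi => le_antisymm (not_lt.1 fun h => hi (hP i h)) (hd.1 j i)

lemma sum_eq_zero_of_forall_not_adj (hd : IsAlloc G D d) {j : V} {P : Finset V}
    (hP : ∀ i ∈ P, ¬ G.Adj j i) : ∑ i ∈ P, d j i = 0 :=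
  Finset.sum_eq_zero fun i hi => hd.2.1 j i (hP i hi)

lemma ratio_pos (hd : IsAlloc G D d) (hD : ∀ i, 0 < D i)
    (hprop : ∀ i j, G.Adj i j → d j i = ratio G D d i * d i j) (i : V) :
    0 < ratio G D d i := by
  refine div_pos ((Finset.sum_nonneg fun j _ => hd.1 j i).lt_of_ne fun hrecv => ?_) (hD i)
  have hin : ∀ j ∈ G.neighborFinset i, d j i = 0 :=
    (Finset.sum_eq_zero_iff_of_nonneg fun j _ => hd.1 j i).1 hrecv.symm
  have hout : ∑ j ∈ G.neighborFinset i, d i j = 0 := Finset.sum_eq_zero fun j hj => by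
    rw [hprop j i ((G.mem_neighborFinset i j).1 hj).symm, hin j hj, mul_zero]
  exact (hD i).ne' (hd.2.2 i ▸ hout)

lemma ratio_mul_ratio_eq_one (hd : IsAlloc G D d)
    (hprop : ∀ i j, G.Adj i j → d j i = ratio G D d i * d i j) {i j : V} (hij : 0 < d i j) :
    ratio G D d i * ratio G D d j = 1 := by
  have hadj : G.Adj i j := by_contra fun h => hij.ne' (hd.2.1 i j h)
  have h := hprop j i hadj.symm
  rw [hprop i j hadj] at h
  have : (ratio G D d i * ratio G D d j - 1) * d i j = 0 := by linear_combination -h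
  exact sub_eq_zero.1 ((mul_eq_zero.1 this).resolve_right hij.ne')

lemma one_le_ratio_mul_ratio (hd : IsAlloc G D d) (hD : ∀ i, 0 < D i)
    (hprop : ∀ i j, G.Adj i j → d j i = ratio G D d i * d i j)
    (hzero : ∀ i j, G.Adj i j → d i j = 0 → 1 / ratio G D d i ≤ ratio G D d j)
    {i j : V} (hadj : G.Adj i j) : 1 ≤ ratio G D d i * ratio G D d j := by
  rcases (hd.1 i j).lt_or_eq with hij | hij
  · exact (hd.ratio_mul_ratio_eq_one hprop hij).ge
  · have h := hzero i j hadj hij.symm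
    rwa [div_le_iff₀ (hd.ratio_pos hD hprop i), mul_comm] at h

end IsAlloc

theorem sum_recv_sublevel_le {d' : V → V → ℝ} (hd : IsAlloc G D d) (hd' : IsAlloc G D d')
    {ρ : V → ℝ} (hρ : ∀ i, 0 < ρ i) (hsupp : ∀ i j, 0 < d i j → ρ i * ρ j = 1)
    (hedge : ∀ i j, G.Adj i j → 1 ≤ ρ i * ρ j) (t : ℝ) :
    ∑ i with ρ i ≤ t, recv G d' i ≤ ∑ i with ρ i ≤ t, recv G d i := by
  simp only [hd.recv_eq, hd'.recv_eq]
  rw [Finset.sum_comm (s := univ.filter (ρ · ≤ t)),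
    Finset.sum_comm (s := univ.filter (ρ · ≤ t))]
  refine Finset.sum_le_sum fun j _ => ?_
  by_cases hj : ∃ i' ∈ univ.filter (ρ · ≤ t), G.Adj j i'
  · obtain ⟨i', hi', hadj⟩ := hj
    have hi't : ρ i' ≤ t := (Finset.mem_filter.1 hi').2
    rw [hd.sum_eq_of_support_subset fun i hji => Finset.mem_filter.2 ⟨mem_univ i, ?_⟩]
    · exact hd'.sum_le j _
    refine le_of_mul_le_mul_left ?_ (hρ j)
    calc ρ j * ρ i = 1 := hsupp j i hji
      _ ≤ ρ j * ρ i' := hedge j i' hadj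
      _ ≤ ρ j * t := mul_le_mul_of_nonneg_left hi't (hρ j).le
  · simp only [not_exists, not_and] at hj
    rw [hd'.sum_eq_zero_of_forall_not_adj hj]
    exact Finset.sum_nonneg fun i _ => hd.1 j i

end

theorem stmt17_general [Fintype V] [DecidableEq V] (G : SimpleGraph V) [DecidableRel G.Adj]
    (D : V → ℝ) (hD : ∀ i, 0 < D i) (d : V → V → ℝ)
    (hd : IsAlloc G D d)
    (hprop : ∀ i j, G.Adj i j → d j i = ratio G D d i * d i j)
    (hzero : ∀ i j, G.Adj i j → d i j = 0 → 1 / ratio G D d i ≤ ratio G D d j) :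
    LexOpt G D d := by
  refine ⟨hd, fun d' hd' => not_lex_sort_of_sum_sublevel_le D _ _ hD univ fun t => ?_⟩
  simp only [mul_ratio (hD _).ne']
  exact sum_recv_sublevel_le hd hd' (hd.ratio_pos hD hprop)
    (fun _ _ => hd.ratio_mul_ratio_eq_one hprop)
    (fun _ _ => hd.one_le_ratio_mul_ratio hD hprop hzero) t

theorem stmt17 [Fintype V] [Nonempty V] [DecidableEq V] (G : SimpleGraph V) [DecidableRel G.Adj]
    (hconn : G.Connected) (D : V → ℝ) (hD : ∀ i, 0 < D i) (d : V → V → ℝ)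
    (hd : IsAlloc G D d)
    (hprop : ∀ i j, G.Adj i j → d j i = ratio G D d i * d i j)
    (hzero : ∀ i j, G.Adj i j → d i j = 0 → 1 / ratio G D d i ≤ ratio G D d j) :
    LexOpt G D d :=
  stmt17_general G D hD d hd hprop hzero
end
end
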